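/- arXiv:1701.04622 — 4 statements merged into one kernel-verified Lean document; each statement's English description precedes it below -/
import Mathlib

section
/- Let c > 0, α > -1/2, χ > c² + α² - 1/4, and c² > α² - 1/4, and let a_α = 0 if α² ≤ 1/4 and a_α = ((α²-1/4)/c²)^{1/4} if α > 1/2. Suppose φ : (0,1] → ℝ is a C² solution of d/dt[(1-t²)φ'(t)] + (χ - c²t² + (1/4 - α²)/t²)φ(t) = 0. Then sup over t in [a_α, 1] of |φ(t)| equals |φ(1)|. -/
/-!
For a solution of the Sturm–Liouville equation `(p f')' + q f = 0`, Sonin's function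
`Q = f² + p f'² / q` has derivative `-f'² (p q)' / q²`, so it increases wherever `q ≠ 0` and
`p q` decreases. Here `p = 1 - t²` and `q(t) = χ - c²t² + (1/4 - α²)/t²`, whose derivative
`2 (α² - 1/4 - c²t⁴) / t³` is `≤ 0` exactly from `a_α` on; together with `q(t) ≥ q(1) > 0` this
makes `p q` decreasing on `(a_α, 1)`. Hence `φ(t)² ≤ Q(t) ≤ lim_{s → 1⁻} Q(s) = φ(1)²`, the
last limit because `p(1) = 0` while `φ'` stays bounded near `1`.
-/

open Set Filter Topology

section Sonin

variable {f f' p q : ℝ → ℝ}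

noncomputable def sonin (p q f f' : ℝ → ℝ) (x : ℝ) : ℝ := f x ^ 2 + p x * f' x ^ 2 / q x

theorem sq_le_sonin {x : ℝ} (hp : 0 ≤ p x) (hq : 0 < q x) : f x ^ 2 ≤ sonin p q f f' x :=
  le_add_of_nonneg_right (div_nonneg (mul_nonneg hp (sq_nonneg _)) hq.le)

theorem hasDerivAt_sonin {x f'' p' q' : ℝ} (hf : HasDerivAt f (f' x) x)
    (hf' : HasDerivAt f' f'' x) (hp : HasDerivAt p p' x) (hq : HasDerivAt q q' x) (hqx : q x ≠ 0)
    (hode : deriv (fun s => p s * f' s) x + q x * f x = 0) :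
    HasDerivAt (sonin p q f f')
      (-(f' x ^ 2 * (p' * q x + p x * q')) / q x ^ 2) x := by
  rw [(hp.fun_mul hf').deriv] at hode
  refine ((hf.fun_pow 2).fun_add ((hp.fun_mul (hf'.fun_pow 2)).fun_div hq hqx)).congr_deriv ?_
  field_simp
  linear_combination (2 * f' x * q x) * hode

theorem monotoneOn_sonin {a b : ℝ} (hf : ∀ x ∈ Ioo a b, HasDerivAt f (f' x) x)
    (hf' : ∀ x ∈ Ioo a b, DifferentiableAt ℝ f' x) (hp : ∀ x ∈ Ioo a b, DifferentiableAt ℝ p x)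
    (hq : ∀ x ∈ Ioo a b, DifferentiableAt ℝ q x) (hq0 : ∀ x ∈ Ioo a b, q x ≠ 0)
    (hpq : ∀ x ∈ Ioo a b, deriv (fun s => p s * q s) x ≤ 0)
    (hode : ∀ x ∈ Ioo a b, deriv (fun s => p s * f' s) x + q x * f x = 0) :
    MonotoneOn (sonin p q f f') (Ioo a b) := by
  have hQ : ∀ x ∈ Ioo a b, HasDerivAt (sonin p q f f')
      (-(f' x ^ 2 * deriv (fun s => p s * q s) x) / q x ^ 2) x := fun x hx => by
    rw [deriv_fun_mul (hp x hx) (hq x hx)]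
    exact hasDerivAt_sonin (hf x hx) (hf' x hx).hasDerivAt (hp x hx).hasDerivAt
      (hq x hx).hasDerivAt (hq0 x hx) (hode x hx)
  refine monotoneOn_of_hasDerivWithinAt_nonneg (convex_Ioo a b)
    (f' := fun x => -(f' x ^ 2 * deriv (fun s => p s * q s) x) / q x ^ 2)
    (fun x hx => (hQ x hx).continuousAt.continuousWithinAt) (fun x hx => ?_) (fun x hx => ?_)
  · rw [interior_Ioo] at hx
    exact (hQ x hx).hasDerivWithinAt
  · rw [interior_Ioo] at hx
    exact div_nonneg (neg_nonneg.2 (mul_nonpos_of_nonneg_of_nonpos (sq_nonneg _) (hpq x hx)))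
      (sq_nonneg _)

theorem tendsto_sonin {l : Filter ℝ} {y L r : ℝ} (hf : Tendsto f l (𝓝 y))
    (hf' : Tendsto f' l (𝓝 L)) (hp : Tendsto p l (𝓝 0)) (hq : Tendsto q l (𝓝 r)) (hr : r ≠ 0) :
    Tendsto (sonin p q f f') l (𝓝 (y ^ 2)) := by
  have h := (hf.pow 2).add ((hp.mul (hf'.pow 2)).div hq hr)
  rwa [zero_mul, zero_div, add_zero] at h

end Sonin

theorem tendsto_deriv_nhdsLT_of_contDiffOn {f : ℝ → ℝ} {a b : ℝ} (hab : a < b)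
    (hf : ContDiffOn ℝ 1 f (Ioc a b)) :
    Tendsto (deriv f) (𝓝[<] b) (𝓝 (derivWithin f (Ioc a b) b)) := by
  have h := (hf.continuousOn_derivWithin (uniqueDiffOn_Ioc a b) le_rfl b (right_mem_Ioc.2 hab)).mono
    (Ioo_subset_Ioc_self : Ioo a b ⊆ Ioc a b)
  rw [ContinuousWithinAt, nhdsWithin_Ioo_eq_nhdsLT hab] at h
  refine h.congr' ?_
  filter_upwards [Ioo_mem_nhdsLT hab] with s hs
  exact derivWithin_of_mem_nhds (Ioc_mem_nhds hs.1 hs.2)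

namespace Prolate

noncomputable def potential (c α χ t : ℝ) : ℝ := χ - c ^ 2 * t ^ 2 + (1/4 - α ^ 2) / t ^ 2

noncomputable def threshold (c α : ℝ) : ℝ :=
  if α ^ 2 ≤ 1/4 then 0 else ((α ^ 2 - 1/4) / c ^ 2) ^ ((1 : ℝ)/4)

variable {c α χ t : ℝ}

theorem threshold_nonneg (c α : ℝ) : 0 ≤ threshold c α := by
  unfold threshold
  split_ifs with h
  · exact le_rfl
  · exact Real.rpow_nonneg (div_nonneg (by linarith) (sq_nonneg c)) _

theorem threshold_lt_one (h : α ^ 2 - 1/4 < c ^ 2) : threshold c α < 1 := by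
  unfold threshold
  split_ifs with hα
  · exact zero_lt_one
  · exact Real.rpow_lt_one (div_nonneg (by linarith) (sq_nonneg c))
      ((div_lt_one (by linarith)).2 h) (by norm_num)

theorem le_mul_pow_four_of_threshold_le (hc : c ≠ 0) (ht : threshold c α ≤ t) :
    α ^ 2 - 1/4 ≤ c ^ 2 * t ^ 4 := by
  unfold threshold at ht
  split_ifs at ht with hα
  · nlinarith [pow_nonneg ht 4, sq_nonneg c]
  · set x := (α ^ 2 - 1/4) / c ^ 2 with hx_def
    have hx : 0 ≤ x := div_nonneg (by linarith) (sq_nonneg c)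
    have hx4 : x ≤ t ^ 4 :=
      calc x = (x ^ ((1 : ℝ)/4)) ^ 4 := by
            rw [← Real.rpow_natCast (x ^ ((1 : ℝ)/4)) 4, ← Real.rpow_mul hx]; norm_num
        _ ≤ t ^ 4 := pow_le_pow_left₀ (Real.rpow_nonneg hx _) ht 4
    rwa [hx_def, div_le_iff₀ (by positivity), mul_comm] at hx4

theorem hasDerivAt_potential (c α χ : ℝ) (ht : t ≠ 0) :
    HasDerivAt (potential c α χ) (2 * (α ^ 2 - 1/4 - c ^ 2 * t ^ 4) / t ^ 3) t := by
  have h := ((hasDerivAt_const t χ).fun_sub ((hasDerivAt_pow 2 t).const_mul (c ^ 2))).fun_add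
    ((hasDerivAt_const t (1/4 - α ^ 2)).fun_div (hasDerivAt_pow 2 t) (pow_ne_zero 2 ht))
  refine h.congr_deriv ?_
  field_simp
  ring

theorem potential_one_le (ht0 : 0 < t) (ht1 : t ≤ 1) (h : α ^ 2 - 1/4 ≤ c ^ 2 * t ^ 4) :
    potential c α χ 1 ≤ potential c α χ t := by
  have hsq : t ^ 2 ≤ 1 := pow_le_one₀ ht0.le ht1
  have h42 : c ^ 2 * t ^ 4 ≤ c ^ 2 * t ^ 2 :=
    mul_le_mul_of_nonneg_left (pow_le_pow_of_le_one ht0.le ht1 (by norm_num)) (sq_nonneg c)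
  have key : potential c α χ t - potential c α χ 1
      = (c ^ 2 * t ^ 2 - (α ^ 2 - 1/4)) * (1 - t ^ 2) / t ^ 2 := by
    unfold potential
    field_simp
    ring
  have : 0 ≤ (c ^ 2 * t ^ 2 - (α ^ 2 - 1/4)) * (1 - t ^ 2) / t ^ 2 :=
    div_nonneg (mul_nonneg (by linarith) (by linarith)) (sq_nonneg t)
  linarith

theorem deriv_weight_mul_potential_nonpos (ht0 : 0 < t) (ht1 : t < 1)
    (h : α ^ 2 - 1/4 ≤ c ^ 2 * t ^ 4) (hq : 0 < potential c α χ t) :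
    deriv (fun s => (1 - s ^ 2) * potential c α χ s) t ≤ 0 := by
  have hp : HasDerivAt (fun s : ℝ => 1 - s ^ 2) (-(2 * t)) t := by
    simpa using (hasDerivAt_const t (1 : ℝ)).fun_sub (hasDerivAt_pow 2 t)
  rw [(hp.fun_mul (hasDerivAt_potential c α χ ht0.ne')).deriv]
  have hq' : 2 * (α ^ 2 - 1/4 - c ^ 2 * t ^ 4) / t ^ 3 ≤ 0 :=
    div_nonpos_of_nonpos_of_nonneg (by linarith) (by positivity)
  nlinarith [mul_nonpos_of_nonneg_of_nonpos (by nlinarith : (0 : ℝ) ≤ 1 - t ^ 2) hq']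

theorem potential_pos (hc : c ≠ 0) (hχ : c ^ 2 + α ^ 2 - 1/4 < χ) (ht0 : 0 < t)
    (ht : threshold c α ≤ t) (ht1 : t ≤ 1) : 0 < potential c α χ t := by
  have h1 : 0 < potential c α χ 1 := by unfold potential; linarith
  exact h1.trans_le (potential_one_le ht0 ht1 (le_mul_pow_four_of_threshold_le hc ht))

variable {φ : ℝ → ℝ}

theorem monotoneOn_sonin_threshold (hc : c ≠ 0) (hχ : c ^ 2 + α ^ 2 - 1/4 < χ)
    (hφ : ContDiffOn ℝ 2 φ (Ioo 0 1))
    (hODE : ∀ t ∈ Ioo (0 : ℝ) 1,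
      deriv (fun s => (1 - s ^ 2) * deriv φ s) t + potential c α χ t * φ t = 0) :
    MonotoneOn (sonin (fun t => 1 - t ^ 2) (potential c α χ) φ (deriv φ))
      (Ioo (threshold c α) 1) := by
  have hD : Ioo (threshold c α) 1 ⊆ Ioo 0 1 := Ioo_subset_Ioo_left (threshold_nonneg c α)
  have hq : ∀ t ∈ Ioo (threshold c α) 1, 0 < potential c α χ t := fun t ht =>
    potential_pos hc hχ (hD ht).1 ht.1.le ht.2.le
  have hdφ : ContDiffOn ℝ 1 (deriv φ) (Ioo 0 1) := hφ.deriv_of_isOpen isOpen_Ioo (by norm_num)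
  refine monotoneOn_sonin (fun t ht => ?_) (fun t ht => ?_) (fun t ht => by fun_prop)
    (fun t ht => (hasDerivAt_potential c α χ (hD ht).1.ne').differentiableAt)
    (fun t ht => (hq t ht).ne')
    (fun t ht => deriv_weight_mul_potential_nonpos (hD ht).1 ht.2
      (le_mul_pow_four_of_threshold_le hc ht.1.le) (hq t ht))
    (fun t ht => hODE t (hD ht))
  · exact ((hφ.differentiableOn (by norm_num) t (hD ht)).differentiableAt
      (isOpen_Ioo.mem_nhds (hD ht))).hasDerivAt
  · exact (hdφ.differentiableOn (by norm_num) t (hD ht)).differentiableAt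
      (isOpen_Ioo.mem_nhds (hD ht))

theorem tendsto_sonin_one (hχ : c ^ 2 + α ^ 2 - 1/4 < χ) (hφ : ContDiffOn ℝ 2 φ (Ioc 0 1)) :
    Tendsto (sonin (fun t => 1 - t ^ 2) (potential c α χ) φ (deriv φ)) (𝓝[<] 1)
      (𝓝 (φ 1 ^ 2)) := by
  have hq1 : potential c α χ 1 ≠ 0 := by unfold potential; linarith
  refine tendsto_sonin ?_ (tendsto_deriv_nhdsLT_of_contDiffOn zero_lt_one (hφ.of_le (by norm_num)))
    ?_ ((hasDerivAt_potential c α χ one_ne_zero).continuousAt.tendsto.mono_left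
      nhdsWithin_le_nhds) hq1
  · exact ((continuousWithinAt_Ioc_iff_Iic zero_lt_one).1
      (hφ.continuousOn 1 (right_mem_Ioc.2 zero_lt_one))).mono Iio_subset_Iic_self
  · exact ((by fun_prop : Continuous fun t : ℝ => 1 - t ^ 2).tendsto' 1 0 (by norm_num)).mono_left
      nhdsWithin_le_nhds

theorem abs_le_abs_one (hc : c ≠ 0) (hχ : c ^ 2 + α ^ 2 - 1/4 < χ)
    (hφ : ContDiffOn ℝ 2 φ (Ioc 0 1))
    (hODE : ∀ t ∈ Ioo (0 : ℝ) 1,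
      deriv (fun s => (1 - s ^ 2) * deriv φ s) t + potential c α χ t * φ t = 0)
    (ht : t ∈ Ioo (threshold c α) 1) : |φ t| ≤ |φ 1| := by
  have hmono := monotoneOn_sonin_threshold hc hχ (hφ.mono Ioo_subset_Ioc_self) hODE
  have ht0 : 0 < t := (threshold_nonneg c α).trans_lt ht.1
  rw [← sq_le_sq]
  calc φ t ^ 2 ≤ sonin (fun t => 1 - t ^ 2) (potential c α χ) φ (deriv φ) t :=
        sq_le_sonin (by nlinarith [ht.2]) (potential_pos hc hχ ht0 ht.1.le ht.2.le)
    _ ≤ φ 1 ^ 2 := ge_of_tendsto (tendsto_sonin_one hχ hφ) (by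
        filter_upwards [Ioo_mem_nhdsLT ht.2] with r hr
        exact hmono ht ⟨ht.1.trans hr.1, hr.2⟩ hr.1.le)

end Prolate

open Prolate

theorem stmt_2_general (c α χ : ℝ) (hc : 0 < c)
    (hχ : χ > c ^ 2 + α ^ 2 - 1/4) (hca : c ^ 2 > α ^ 2 - 1/4)
    (aα : ℝ)
    (haα : aα = if α ^ 2 ≤ 1/4 then 0 else ((α ^ 2 - 1/4) / c ^ 2) ^ ((1 : ℝ)/4))
    (φ : ℝ → ℝ) (hφ : ContDiffOn ℝ 2 φ (Ioc 0 1))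
    (hφcont : ContinuousOn φ (Icc 0 1))
    (hODE : ∀ t ∈ Ioo (0 : ℝ) 1,
      deriv (fun s => (1 - s ^ 2) * deriv φ s) t
        + (χ - c ^ 2 * t ^ 2 + (1/4 - α ^ 2) / t ^ 2) * φ t = 0) :
    sSup ((fun t => |φ t|) '' Icc aα 1) = |φ 1| := by
  have ha : aα = threshold c α := haα
  have ha1 : aα < 1 := ha ▸ threshold_lt_one hca
  have hsub : Ioo aα 1 ⊆ Icc 0 1 :=
    (Ioo_subset_Ioo_left (ha ▸ threshold_nonneg c α)).trans Ioo_subset_Icc_self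
  refine IsGreatest.csSup_eq ⟨⟨1, right_mem_Icc.2 ha1.le, rfl⟩, ?_⟩
  rintro _ ⟨t, ht, rfl⟩
  -- the endpoint `aα`, which may be `0` where the equation is singular, is reached by continuity
  rw [← closure_Ioo ha1.ne] at ht
  exact ContinuousWithinAt.closure_le ht
    ((hφcont t (closure_minimal hsub isClosed_Icc ht)).mono hsub).abs continuousWithinAt_const
    fun s hs => abs_le_abs_one hc.ne' hχ hφ hODE (ha ▸ hs)

theorem stmt_2 (c α χ : ℝ) (hc : 0 < c) (hα : -1/2 < α)
    (hχ : χ > c ^ 2 + α ^ 2 - 1/4) (hca : c ^ 2 > α ^ 2 - 1/4)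
    (aα : ℝ)
    (haα : aα = if α ^ 2 ≤ 1/4 then 0 else ((α ^ 2 - 1/4) / c ^ 2) ^ ((1 : ℝ)/4))
    (φ : ℝ → ℝ) (hφ : ContDiffOn ℝ 2 φ (Ioc 0 1))
    (hφcont : ContinuousOn φ (Icc 0 1))
    (hODE : ∀ t ∈ Ioo (0 : ℝ) 1,
      deriv (fun s => (1 - s ^ 2) * deriv φ s) t
        + (χ - c ^ 2 * t ^ 2 + (1/4 - α ^ 2) / t ^ 2) * φ t = 0) :
    sSup ((fun t => |φ t|) '' Icc aα 1) = |φ 1| :=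
  stmt_2_general c α χ hc hχ hca aα haα φ hφ hφcont hODE
end

section
/- Let c > 0, α > -1/2, χ > c² + α² - 1/4, and c² > α² - 1/4, and let a_α be as defined (0 if α² ≤ 1/4, ((α²-1/4)/c²)^{1/4} if α > 1/2). Suppose φ : (0,1] → ℝ is a C² solution of d/dt[(1-t²)φ'(t)] + (χ - c²t² + (1/4 - α²)/t²)φ(t) = 0 with ∫₀¹ φ(t)² dt = 1. Then sup over t in [a_α, 1] of √(1-t²)·|φ(t)| ≤ √2. -/
/-!
On `[a_α, 1]` the potential `q` is positive and nonincreasing: `a_α` is exactly the point beyond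
which `c² t⁴ ≥ α² - 1/4`. Hence the energy `K = (1 - t²) (φ² + (1 - t²) φ'² / q)` satisfies
`K' = -2tφ² - (1 - t²)² q' φ'² / q² ≥ -2tφ²`, and since `K(1) = 0`, integrating from `t` to `1`
gives `(1 - t²) φ(t)² ≤ K(t) ≤ ∫_t^1 2sφ² ≤ 2 ∫_0^1 φ² = 2`. The endpoint `t = 0`, which occurs only
when `a_α = 0`, follows by continuity.
-/

open Set Filter Topology MeasureTheory

namespace FiniteHankel

noncomputable def q (c α χ t : ℝ) : ℝ := χ - c ^ 2 * t ^ 2 + (1/4 - α ^ 2) / t ^ 2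

noncomputable def aAlpha (c α : ℝ) : ℝ :=
  if α ^ 2 ≤ 1/4 then 0 else ((α ^ 2 - 1/4) / c ^ 2) ^ ((1 : ℝ)/4)

lemma aAlpha_nonneg (c α : ℝ) : 0 ≤ aAlpha c α := by
  unfold aAlpha
  split_ifs with hα
  · exact le_rfl
  · exact Real.rpow_nonneg (div_nonneg (by linarith) (sq_nonneg c)) _

lemma sub_le_mul_pow_four_of_aAlpha_le {c α t : ℝ} (hc : 0 < c) (ht : aAlpha c α ≤ t) :
    α ^ 2 - 1/4 ≤ c ^ 2 * t ^ 4 := by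
  by_cases hα : α ^ 2 ≤ 1/4
  · nlinarith [mul_nonneg (sq_nonneg c) (pow_nonneg (sq_nonneg t) 2)]
  · have hbase : 0 ≤ (α ^ 2 - 1/4) / c ^ 2 := div_nonneg (by linarith) (sq_nonneg c)
    have ha4 : aAlpha c α ^ 4 = (α ^ 2 - 1/4) / c ^ 2 := by
      rw [aAlpha, if_neg hα, ← Real.rpow_natCast, ← Real.rpow_mul hbase]
      norm_num
    have := pow_le_pow_left₀ (aAlpha_nonneg c α) ht 4
    rw [ha4, div_le_iff₀ (by positivity)] at this
    linarith

lemma q_pos {c α χ t : ℝ} (hχ : c ^ 2 + α ^ 2 - 1/4 < χ) (ht : 0 < t) (ht1 : t ≤ 1)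
    (hα : α ^ 2 - 1/4 ≤ c ^ 2 * t ^ 4) : 0 < q c α χ t := by
  have ht2 : 0 < t ^ 2 := by positivity
  have ht21 : t ^ 2 ≤ 1 := pow_le_one₀ ht.le ht1
  have hct : α ^ 2 - 1/4 ≤ c ^ 2 * t ^ 2 := by
    nlinarith [mul_le_mul_of_nonneg_left ht21 (mul_nonneg (sq_nonneg c) ht2.le)]
  -- `q t · t² - (χ - c² - α² + 1/4) t² = (1 - t²)(c² t² - α² + 1/4)`
  have key : 0 < q c α χ t * t ^ 2 := by
    rw [q, add_mul, div_mul_cancel₀ _ ht2.ne']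
    nlinarith [mul_pos ht2 (sub_pos.2 hχ), mul_nonneg (sub_nonneg.2 ht21) (sub_nonneg.2 hct)]
  exact pos_of_mul_pos_left key ht2.le

lemma hasDerivAt_q (c α χ : ℝ) {t : ℝ} (ht : t ≠ 0) :
    HasDerivAt (q c α χ) (-2 * c ^ 2 * t - 2 * (1/4 - α ^ 2) / t ^ 3) t := by
  have h : HasDerivAt (fun s => χ - c ^ 2 * s ^ 2 + (1/4 - α ^ 2) / s ^ 2) _ t :=
    (((hasDerivAt_pow 2 t).const_mul (c ^ 2)).const_sub χ).add
      ((hasDerivAt_const t (1/4 - α ^ 2)).div (hasDerivAt_pow 2 t) (pow_ne_zero 2 ht))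
  refine h.congr_deriv ?_
  field_simp
  ring

lemma deriv_q_nonpos {c α χ t : ℝ} (ht : 0 < t) (hα : α ^ 2 - 1/4 ≤ c ^ 2 * t ^ 4) :
    deriv (q c α χ) t ≤ 0 := by
  have ht3 : 0 < t ^ 3 := by positivity
  have h : -2 * c ^ 2 * t - 2 * (1/4 - α ^ 2) / t ^ 3
      = 2 * (α ^ 2 - 1/4 - c ^ 2 * t ^ 4) / t ^ 3 := by
    field_simp
    ring
  rw [(hasDerivAt_q c α χ ht.ne').deriv, h]
  exact div_nonpos_of_nonpos_of_nonneg (by linarith) ht3.le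

lemma hasDerivAt_derivWithin_of_mem_nhds {φ : ℝ → ℝ} {s : Set ℝ} {t : ℝ}
    (hφ : DifferentiableOn ℝ φ s) (hs : s ∈ 𝓝 t) : HasDerivAt φ (derivWithin φ s t) t := by
  rw [derivWithin_of_mem_nhds hs]
  exact hφ.hasDerivAt hs

lemma hasDerivAt_derivWithin_of_ode {φ p : ℝ → ℝ} {s : Set ℝ} {t p' r : ℝ}
    (hφ : ContDiffOn ℝ 2 φ s) (hs : UniqueDiffOn ℝ s) (ht : s ∈ 𝓝 t) (hp : HasDerivAt p p' t)
    (hpt : p t ≠ 0) (hode : deriv (fun x => p x * deriv φ x) t + r = 0) :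
    HasDerivAt (derivWithin φ s) ((-(p' * derivWithin φ s t) - r) / p t) t := by
  have hψ : HasDerivAt (derivWithin φ s) (deriv (derivWithin φ s) t) t :=
    (hasDerivAt_derivWithin_of_mem_nhds
      ((hφ.derivWithin hs (by norm_num)).differentiableOn one_ne_zero) ht).differentiableAt
      |>.hasDerivAt
  have hflux : HasDerivAt (fun x => p x * deriv φ x)
      (p' * derivWithin φ s t + p t * deriv (derivWithin φ s) t) t := by
    refine (hp.mul hψ).congr_of_eventuallyEq ?_
    filter_upwards [eventually_eventually_nhds.2 ht] with x hx
    rw [Pi.mul_apply, derivWithin_of_mem_nhds (show s ∈ 𝓝 x from hx)]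
  rw [hflux.deriv] at hode
  convert hψ using 1
  field_simp
  linarith

noncomputable def energy (q φ ψ : ℝ → ℝ) (t : ℝ) : ℝ :=
  (1 - t ^ 2) * (φ t ^ 2 + (1 - t ^ 2) / q t * ψ t ^ 2)

lemma hasDerivAt_energy {q φ ψ : ℝ → ℝ} {t q' : ℝ} (hφ : HasDerivAt φ (ψ t) t)
    (hψ : HasDerivAt ψ ((2 * t * ψ t - q t * φ t) / (1 - t ^ 2)) t) (hq : HasDerivAt q q' t)
    (hqt : q t ≠ 0) (ht : 1 - t ^ 2 ≠ 0) :
    HasDerivAt (energy q φ ψ) (-2 * t * φ t ^ 2 - (1 - t ^ 2) ^ 2 * q' / q t ^ 2 * ψ t ^ 2) t := by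
  have hw : HasDerivAt (fun s : ℝ => 1 - s ^ 2) (-(2 * t)) t := by
    simpa using (hasDerivAt_pow 2 t).const_sub 1
  have h : HasDerivAt (fun s => (1 - s ^ 2) * (φ s ^ 2 + (1 - s ^ 2) / q s * ψ s ^ 2)) _ t :=
    hw.mul ((hφ.pow 2).add ((hw.div hq hqt).mul (hψ.pow 2)))
  refine h.congr_deriv ?_
  simp only [Pi.div_apply]
  field_simp
  ring

lemma energy_le_integral {q q' φ ψ : ℝ → ℝ} {a : ℝ} (ha : -1 ≤ a) (ha1 : a ≤ 1)
    (hφ : ContinuousOn φ (Icc a 1)) (hψ : ContinuousOn ψ (Icc a 1))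
    (hq : ContinuousOn q (Icc a 1)) (hq_pos : ∀ t ∈ Icc a 1, 0 < q t)
    (hφ' : ∀ t ∈ Ioo a 1, HasDerivAt φ (ψ t) t)
    (hψ' : ∀ t ∈ Ioo a 1, HasDerivAt ψ ((2 * t * ψ t - q t * φ t) / (1 - t ^ 2)) t)
    (hq' : ∀ t ∈ Ioo a 1, HasDerivAt q (q' t) t) (hq'_nonpos : ∀ t ∈ Ioo a 1, q' t ≤ 0) :
    energy q φ ψ a ≤ ∫ t in a..1, 2 * t * φ t ^ 2 := by
  have hcont : ContinuousOn (energy q φ ψ) (Icc a 1) := by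
    have hw : ContinuousOn (fun t : ℝ => 1 - t ^ 2) (Icc a 1) := by fun_prop
    exact hw.mul ((hφ.pow 2).add ((hw.div hq fun t ht => (hq_pos t ht).ne').mul (hψ.pow 2)))
  have hint : IntegrableOn (fun t => -(2 * t * φ t ^ 2)) (Icc a 1) :=
    ContinuousOn.integrableOn_compact isCompact_Icc (by fun_prop)
  have key := intervalIntegral.integral_le_sub_of_hasDeriv_right_of_le ha1 hcont
    (fun t ht => (hasDerivAt_energy (hφ' t ht) (hψ' t ht) (hq' t ht)
      (hq_pos t (Ioo_subset_Icc_self ht)).ne' (by nlinarith [ht.1, ht.2])).hasDerivWithinAt)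
    hint (fun t ht => ?_)
  · rw [intervalIntegral.integral_neg, energy] at key
    norm_num at key
    linarith
  · have : (1 - t ^ 2) ^ 2 * q' t / q t ^ 2 * ψ t ^ 2 ≤ 0 :=
      mul_nonpos_of_nonpos_of_nonneg (div_nonpos_of_nonpos_of_nonneg
        (mul_nonpos_of_nonneg_of_nonpos (sq_nonneg _) (hq'_nonpos t ht)) (sq_nonneg _))
        (sq_nonneg _)
    linarith

lemma integral_two_mul_sq_le {φ : ℝ → ℝ} {a : ℝ} (ha : 0 ≤ a) (ha1 : a ≤ 1)
    (hφ : ContinuousOn φ (Icc 0 1)) :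
    ∫ t in a..1, 2 * t * φ t ^ 2 ≤ 2 * ∫ t in (0:ℝ)..1, φ t ^ 2 := by
  have hint : ∀ f : ℝ → ℝ, ContinuousOn f (Icc 0 1) → IntervalIntegrable f volume 0 1 :=
    fun f hf => hf.intervalIntegrable_of_Icc zero_le_one
  calc ∫ t in a..1, 2 * t * φ t ^ 2
      ≤ ∫ t in (0:ℝ)..1, 2 * t * φ t ^ 2 := by
        refine intervalIntegral.integral_mono_interval ha ha1 le_rfl ?_ (hint _ (by fun_prop))
        filter_upwards [ae_restrict_mem measurableSet_Ioc] with t ht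
        have := ht.1.le
        positivity
    _ ≤ ∫ t in (0:ℝ)..1, 2 * φ t ^ 2 := by
        refine intervalIntegral.integral_mono_on zero_le_one (hint _ (by fun_prop))
          (hint _ (by fun_prop)) fun t ht => ?_
        nlinarith [mul_nonneg (sub_nonneg.2 ht.2) (sq_nonneg (φ t))]
    _ = 2 * ∫ t in (0:ℝ)..1, φ t ^ 2 := intervalIntegral.integral_const_mul _ _

lemma one_sub_sq_mul_sq_le_integral {c α χ a : ℝ} {φ : ℝ → ℝ}
    (hχ : c ^ 2 + α ^ 2 - 1/4 < χ) (hφ : ContDiffOn ℝ 2 φ (Ioc 0 1))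
    (hODE : ∀ t ∈ Ioo (0 : ℝ) 1,
      deriv (fun s => (1 - s ^ 2) * deriv φ s) t + q c α χ t * φ t = 0)
    (ha : 0 < a) (ha1 : a ≤ 1) (hadm : ∀ t ∈ Icc a 1, α ^ 2 - 1/4 ≤ c ^ 2 * t ^ 4) :
    (1 - a ^ 2) * φ a ^ 2 ≤ ∫ t in a..1, 2 * t * φ t ^ 2 := by
  -- the one-sided derivative keeps `φ'` continuous up to `t = 1`, as the energy argument needs
  set ψ := derivWithin φ (Ioc 0 1)
  have hsub : Icc a 1 ⊆ Ioc 0 1 := Icc_subset_Ioc ha le_rfl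
  have hnhds : ∀ t ∈ Ioo a 1, Ioc (0:ℝ) 1 ∈ 𝓝 t :=
    fun t ht => Ioc_mem_nhds (ha.trans ht.1) ht.2
  have hq_pos : ∀ t ∈ Icc a 1, 0 < q c α χ t :=
    fun t ht => q_pos hχ (ha.trans_le ht.1) ht.2 (hadm t ht)
  have hq' : ∀ t ∈ Icc a 1, HasDerivAt (q c α χ) (deriv (q c α χ) t) t :=
    fun t ht => (hasDerivAt_q c α χ (ha.trans_le ht.1).ne').differentiableAt.hasDerivAt
  have hψ' : ∀ t ∈ Ioo a 1,
      HasDerivAt ψ ((2 * t * ψ t - q c α χ t * φ t) / (1 - t ^ 2)) t := by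
    intro t ht
    have hw : HasDerivAt (fun s : ℝ => 1 - s ^ 2) (-(2 * t)) t := by
      simpa using (hasDerivAt_pow 2 t).const_sub 1
    refine (hasDerivAt_derivWithin_of_ode hφ (uniqueDiffOn_Ioc 0 1) (hnhds t ht) hw
      (by nlinarith [ha, ht.1, ht.2]) (hODE t ⟨ha.trans ht.1, ht.2⟩)).congr_deriv ?_
    ring
  have henergy := energy_le_integral (by linarith) ha1 (hφ.continuousOn.mono hsub)
    ((hφ.continuousOn_derivWithin (uniqueDiffOn_Ioc 0 1) (by norm_num)).mono hsub)
    (fun t ht => (hq' t ht).continuousAt.continuousWithinAt) hq_pos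
    (fun t ht => hasDerivAt_derivWithin_of_mem_nhds (hφ.differentiableOn two_ne_zero) (hnhds t ht))
    hψ' (fun t ht => hq' t (Ioo_subset_Icc_self ht))
    (fun t ht => deriv_q_nonpos (ha.trans ht.1) (hadm t (Ioo_subset_Icc_self ht)))
  have ha1' : 0 ≤ 1 - a ^ 2 := by nlinarith
  have hψa : 0 ≤ (1 - a ^ 2) * ((1 - a ^ 2) / q c α χ a * ψ a ^ 2) :=
    mul_nonneg ha1' (mul_nonneg (div_nonneg ha1' (hq_pos a ⟨le_rfl, ha1⟩).le) (sq_nonneg _))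
  calc (1 - a ^ 2) * φ a ^ 2 ≤ energy (q c α χ) φ ψ a := by rw [energy]; linarith
    _ ≤ _ := henergy

end FiniteHankel

open FiniteHankel in
theorem stmt_3_general (c α χ : ℝ) (hc : 0 < c)
    (hχ : χ > c ^ 2 + α ^ 2 - 1/4)
    (aα : ℝ)
    (haα : aα = if α ^ 2 ≤ 1/4 then 0 else ((α ^ 2 - 1/4) / c ^ 2) ^ ((1 : ℝ)/4))
    (φ : ℝ → ℝ) (hφ : ContDiffOn ℝ 2 φ (Ioc 0 1))
    (hφcont : ContinuousOn φ (Icc 0 1))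
    (hODE : ∀ t ∈ Ioo (0 : ℝ) 1,
      deriv (fun s => (1 - s ^ 2) * deriv φ s) t
        + (χ - c ^ 2 * t ^ 2 + (1/4 - α ^ 2) / t ^ 2) * φ t = 0)
    (hnorm : ∫ t in (0:ℝ)..1, (φ t) ^ 2 = 1) :
    ∀ t ∈ Icc aα 1, Real.sqrt (1 - t ^ 2) * |φ t| ≤ Real.sqrt 2 := by
  have haα : aα = aAlpha c α := haα
  have hpos : ∀ t ∈ Ioc 0 1, aα ≤ t → (1 - t ^ 2) * φ t ^ 2 ≤ 2 := fun t ht hat =>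
    calc (1 - t ^ 2) * φ t ^ 2
        ≤ ∫ s in t..1, 2 * s * φ s ^ 2 := one_sub_sq_mul_sq_le_integral hχ hφ hODE ht.1 ht.2
          fun s hs => sub_le_mul_pow_four_of_aAlpha_le hc (haα ▸ hat.trans hs.1)
      _ ≤ 2 * ∫ s in (0:ℝ)..1, φ s ^ 2 := integral_two_mul_sq_le ht.1.le ht.2 hφcont
      _ = 2 := by rw [hnorm, mul_one]
  intro t ht
  have ht0 : 0 ≤ t := (haα ▸ aAlpha_nonneg c α).trans ht.1
  have hbound : (1 - t ^ 2) * φ t ^ 2 ≤ 2 := by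
    rcases ht0.lt_or_eq with ht0 | rfl
    · exact hpos t ⟨ht0, ht.2⟩ ht.1
    · refine le_on_closure (fun s hs => hpos s hs (ht.1.trans hs.1.le)) ?_ continuousOn_const ?_
        <;> rw [closure_Ioc zero_ne_one]
      · fun_prop
      · exact ⟨le_rfl, zero_le_one⟩
  calc Real.sqrt (1 - t ^ 2) * |φ t| = Real.sqrt ((1 - t ^ 2) * φ t ^ 2) := by
        rw [Real.sqrt_mul (by nlinarith [ht.2]), Real.sqrt_sq_eq_abs]
    _ ≤ Real.sqrt 2 := Real.sqrt_le_sqrt hbound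

theorem stmt_3 (c α χ : ℝ) (hc : 0 < c) (hα : -1/2 < α)
    (hχ : χ > c ^ 2 + α ^ 2 - 1/4) (hca : c ^ 2 > α ^ 2 - 1/4)
    (aα : ℝ)
    (haα : aα = if α ^ 2 ≤ 1/4 then 0 else ((α ^ 2 - 1/4) / c ^ 2) ^ ((1 : ℝ)/4))
    (φ : ℝ → ℝ) (hφ : ContDiffOn ℝ 2 φ (Ioc 0 1))
    (hφcont : ContinuousOn φ (Icc 0 1))
    (hODE : ∀ t ∈ Ioo (0 : ℝ) 1,
      deriv (fun s => (1 - s ^ 2) * deriv φ s) t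
        + (χ - c ^ 2 * t ^ 2 + (1/4 - α ^ 2) / t ^ 2) * φ t = 0)
    (hnorm : ∫ t in (0:ℝ)..1, (φ t) ^ 2 = 1) :
    ∀ t ∈ Icc aα 1, Real.sqrt (1 - t ^ 2) * |φ t| ≤ Real.sqrt 2 :=
  stmt_3_general c α χ hc hχ aα haα φ hφ hφcont hODE hnorm
end

section
/- Let c > 0, α > -1/2, and suppose χ ≥ c² + α² - 1/4. Then for all x in (0,1): (1-x²)^{-2} + (χ - c²x²)/(1-x²) + (1/4 - α²)/(x²(1-x²)) ≥ χ - (α² - 1/4) - (α² - 1/4)/x². -/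
open Set

theorem stmt_8 (c α χ : ℝ) (hc : 0 < c) (hα : -1/2 < α)
    (hχ : χ ≥ c ^ 2 + α ^ 2 - 1/4) :
    ∀ x ∈ Ioo (0 : ℝ) 1,
      1 / (1 - x ^ 2) ^ 2 + (χ - c ^ 2 * x ^ 2) / (1 - x ^ 2)
          + (1/4 - α ^ 2) / (x ^ 2 * (1 - x ^ 2)) ≥
        χ - (α ^ 2 - 1/4) - (α ^ 2 - 1/4) / x ^ 2 := by
  rintro x ⟨hx0, hx1⟩
  have ht : 0 < x ^ 2 := by positivity
  have hs : 0 < 1 - x ^ 2 := by nlinarith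
  rw [ge_iff_le, ← sub_nonneg]
  have key : 1 / (1 - x ^ 2) ^ 2 + (χ - c ^ 2 * x ^ 2) / (1 - x ^ 2)
      + (1/4 - α ^ 2) / (x ^ 2 * (1 - x ^ 2))
      - (χ - (α ^ 2 - 1/4) - (α ^ 2 - 1/4) / x ^ 2)
      = 1 / (1 - x ^ 2) ^ 2 + x ^ 2 * (χ + (1/4 - α ^ 2) - c ^ 2) / (1 - x ^ 2) := by
    field_simp
    ring
  rw [key]
  have h1 : 0 ≤ χ + (1/4 - α ^ 2) - c ^ 2 := by linarith
  positivity
end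

section
/- Let c > 0, α > -1/2, and suppose χ ≤ c² + α² - 1/4 and x ∈ [1-η, 1) with 0 < η ≤ 1 - √(5/6). Then χ - c²x² + (1/4 - α²)/x² ≤ 2·(χ + 11/20)·(1 - x). -/
open Set

set_option maxHeartbeats 1000000 in
theorem stmt_17 (c α χ η : ℝ) (hc : 0 < c) (hα : -1/2 < α)
    (hχ : χ ≤ c ^ 2 + α ^ 2 - 1/4) (hη0 : 0 < η) (hη1 : η ≤ 1 - Real.sqrt (5/6))
    (x : ℝ) (hx : x ∈ Ico (1 - η) 1) :
    χ - c ^ 2 * x ^ 2 + (1/4 - α ^ 2) / x ^ 2 ≤ 2 * (χ + 11/20) * (1 - x) := by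
  obtain ⟨hx1, hxlt⟩ := hx
  set s := Real.sqrt (5/6) with hsdef
  have hs : s ^ 2 = 5/6 := Real.sq_sqrt (by norm_num)
  have hs0 : (0:ℝ) ≤ s := Real.sqrt_nonneg _
  have hxs : s ≤ x := by linarith
  have hx0 : 0 < x := by nlinarith
  have hx2 : 5/6 ≤ x ^ 2 := by nlinarith
  have hxp : (0:ℝ) < x ^ 2 := by positivity
  set u := (x ^ 2)⁻¹ with hudef
  have hu : u * x ^ 2 = 1 := inv_mul_cancel₀ (ne_of_gt hxp)
  have hu0 : 0 < u := by positivity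
  have hu65 : u ≤ 6/5 := by nlinarith
  have hrw : (1/4 - α ^ 2) / x ^ 2 = (1/4 - α ^ 2) * u := div_eq_mul_inv _ _
  rw [hrw]
  have ha0 : 0 ≤ α ^ 2 := sq_nonneg α
  rcases le_or_gt χ (-(11/20)) with hcase | hcase
  · -- crude bound: LHS ≤ χ + 3/10, RHS ≥ 2(χ+11/20)(1-s)
    have h1 : (1/4 - α ^ 2) * u ≤ 3/10 := by nlinarith
    have h2 : 0 ≤ c ^ 2 * x ^ 2 := by positivity
    have h3 : 2 * (χ + 11/20) * (1 - s) ≤ 2 * (χ + 11/20) * (1 - x) := by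
      have hxs' : 1 - x ≤ 1 - s := by linarith
      have hneg : 2 * (χ + 11/20) ≤ 0 := by linarith
      exact mul_le_mul_of_nonpos_left hxs' hneg
    have hs12 : 1/2 < s := by nlinarith
    have h4 : 0 ≤ (-χ - 11/20) * (2 * s - 1) := mul_nonneg (by linarith) (by linarith)
    have h5 : χ + 3/10 ≤ 2 * (χ + 11/20) * (1 - s) := by nlinarith [h4]
    linarith [h1, h2, h3, h5]
  · -- main bound
    have h1x2 : 0 ≤ 1 - x ^ 2 := by nlinarith
    have hux0 : 0 ≤ u - x ^ 2 := by nlinarith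
    have hq : (u - x ^ 2 - 11/5 * (1 - x ^ 2)) * x ^ 2 ≤ 0 := by nlinarith [hu, mul_nonneg h1x2 (by nlinarith : (0:ℝ) ≤ 6/5 * x ^ 2 - 1)]
    have hux : u - x ^ 2 ≤ 11/5 * (1 - x ^ 2) := by nlinarith [hq, hxp]
    have key : (1/4 - α ^ 2) * (u - x ^ 2) ≤ 11/20 * (1 - x ^ 2) := by
      rcases le_or_gt (α ^ 2) (1/4) with hA | hA
      · have : (1/4 - α ^ 2) * (u - x ^ 2) ≤ (1/4) * (u - x ^ 2) :=
          mul_le_mul_of_nonneg_right (by linarith) hux0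
        nlinarith
      · have : (1/4 - α ^ 2) * (u - x ^ 2) ≤ 0 :=
          mul_nonpos_of_nonpos_of_nonneg (by linarith) hux0
        nlinarith
    have hc2 : χ + (1/4 - α ^ 2) ≤ c ^ 2 := by linarith
    have hmul : (χ + (1/4 - α ^ 2)) * x ^ 2 ≤ c ^ 2 * x ^ 2 :=
      mul_le_mul_of_nonneg_right hc2 (le_of_lt hxp)
    have step : χ - c ^ 2 * x ^ 2 + (1/4 - α ^ 2) * u ≤ (χ + 11/20) * (1 - x ^ 2) := by
      nlinarith [hmul, key]
    have hfin : (χ + 11/20) * (1 - x ^ 2) ≤ 2 * (χ + 11/20) * (1 - x) := by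
      nlinarith [mul_nonneg (mul_nonneg (by linarith : (0:ℝ) ≤ χ + 11/20) (by linarith : (0:ℝ) ≤ 1 - x)) (by linarith : (0:ℝ) ≤ 1 - x)]
    linarith
end
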